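/- arXiv:1802.00079 — 2 statements merged into one kernel-verified Lean document; each statement's English description precedes it below -/
import Mathlib

section
/- Let (E, ρ) be a b_v(s) metric space, S : E → E a Kannan type mapping with constant γ ∈ [0, 1/2), and u₀ ∈ E. Then the Picard iteration sequence u_n = Sⁿ u₀ is a Cauchy sequence, i.e., ρ(u_n, u_{n+p}) → 0 as n → ∞ uniformly in p ≥ 1; specifically ρ(u_n, u_{n+p}) ≤ γ[(γ/(1−γ))^{n−1} + (γ/(1−γ))^{n+p−1}] ρ(u₀, S u₀). -/
open Filter Topology

/-- A `b_v(s)` metric space structure on `E`. -/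
structure BvMetric (E : Type*) (v : ℕ) (s : ℝ) where
  rho : E → E → ℝ
  nonneg : ∀ u w, 0 ≤ rho u w
  eq_iff : ∀ u w, rho u w = 0 ↔ u = w
  symm : ∀ u w, rho u w = rho w u
  one_le_s : 1 ≤ s
  one_le_v : 1 ≤ v
  /-- polygonal inequality along a chain `c 0 = u, c 1, …, c v, c (v+1) = w`,
  required when the interior points are pairwise distinct and differ from the endpoints. -/
  polygon : ∀ c : Fin (v + 2) → E,
    (Function.Injective fun i : Fin v => c i.succ.castSucc) →
    (∀ i : Fin v, c i.succ.castSucc ≠ c 0 ∧ c i.succ.castSucc ≠ c (Fin.last (v + 1))) →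
    rho (c 0) (c (Fin.last (v + 1))) ≤
      s * ∑ i : Fin (v + 1), rho (c i.castSucc) (c i.succ)

/-- Cauchy sequence with respect to a `b_v(s)` metric. -/
def BvMetric.IsCauchy {E : Type*} {v : ℕ} {s : ℝ} (d : BvMetric E v s) (u : ℕ → E) : Prop :=
  ∀ ε > (0 : ℝ), ∃ N, ∀ m ≥ N, ∀ n ≥ N, d.rho (u m) (u n) < ε

/-- Completeness: every Cauchy sequence converges. -/
def BvMetric.Complete {E : Type*} {v : ℕ} {s : ℝ} (d : BvMetric E v s) : Prop :=
  ∀ u : ℕ → E, d.IsCauchy u → ∃ x : E, Tendsto (fun n => d.rho (u n) x) atTop (𝓝 0)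

/-- `S` is weakly contractive with respect to the comparison function `φ`. -/
def BvMetric.WeaklyContractive {E : Type*} {v : ℕ} {s : ℝ} (d : BvMetric E v s)
    (S : E → E) (φ : ℝ → ℝ) : Prop :=
  ∀ u w, d.rho (S u) (S w) ≤ d.rho u w - φ (d.rho u w)

/-- `φ : [0,∞) → [0,∞)` is nondecreasing, continuous, and vanishes exactly at `0`. -/
def IsComparison (φ : ℝ → ℝ) : Prop :=
  MonotoneOn φ (Set.Ici 0) ∧ ContinuousOn φ (Set.Ici 0) ∧
    (∀ t ≥ (0 : ℝ), 0 ≤ φ t) ∧ (∀ t ≥ (0 : ℝ), (φ t = 0 ↔ t = 0))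

/-- `S` is a Kannan type mapping with constant `γ`. -/
def BvMetric.KannanType {E : Type*} {v : ℕ} {s : ℝ} (d : BvMetric E v s)
    (S : E → E) (γ : ℝ) : Prop :=
  ∀ u w, d.rho (S u) (S w) ≤ γ * (d.rho u (S u) + d.rho w (S w))

/-!
Applied to `x` and `S x`, the Kannan condition gives `ρ(S x, S² x) ≤ γ/(1-γ) · ρ(x, S x)`, so the
steps of the Picard sequence decay geometrically. Applied to `Sᵐ u` and `Sⁿ u`, it bounds
`ρ(Sᵐ⁺¹ u, Sⁿ⁺¹ u)` by `γ` times the steps at `m` and at `n`; no triangle or polygonal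
inequality is needed.
-/

namespace BvMetric

variable {E : Type*} {v : ℕ} {s : ℝ} (d : BvMetric E v s)

theorem isCauchy_of_rho_succ_le {x : ℕ → E} {f : ℕ → ℝ} (hf : Tendsto f atTop (𝓝 0))
    (hx : ∀ m n, d.rho (x (m + 1)) (x (n + 1)) ≤ f m + f n) : d.IsCauchy x := by
  intro ε hε
  obtain ⟨N, hN⟩ := eventually_atTop.1 (hf.eventually (gt_mem_nhds (half_pos hε)))
  refine ⟨N + 1, fun m hm n hn => ?_⟩
  obtain ⟨m, rfl⟩ : ∃ k, m = k + 1 := ⟨m - 1, by omega⟩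
  obtain ⟨n, rfl⟩ : ∃ k, n = k + 1 := ⟨n - 1, by omega⟩
  linarith [hx m n, hN m (by omega), hN n (by omega)]

namespace KannanType

variable {d} {S : E → E} {γ : ℝ}

theorem rho_map_le (hS : d.KannanType S γ) (hγ : γ < 1) (x : E) :
    d.rho (S x) (S (S x)) ≤ γ / (1 - γ) * d.rho x (S x) := by
  have h1γ : 0 < 1 - γ := by linarith
  rw [div_mul_eq_mul_div, le_div_iff₀ h1γ]
  linarith [hS x (S x)]

theorem rho_iterate_succ_le (hS : d.KannanType S γ) (hγ0 : 0 ≤ γ) (hγ : γ < 1) (u : E) (k : ℕ) :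
    d.rho (S^[k] u) (S^[k + 1] u) ≤ (γ / (1 - γ)) ^ k * d.rho u (S u) := by
  refine le_geom (u := fun k => d.rho (S^[k] u) (S^[k + 1] u))
    (div_nonneg hγ0 (by linarith)) k fun j _ => ?_
  simpa only [Function.iterate_succ_apply'] using hS.rho_map_le hγ (S^[j] u)

theorem rho_iterate_succ_succ_le (hS : d.KannanType S γ) (hγ0 : 0 ≤ γ) (hγ : γ < 1) (u : E)
    (m n : ℕ) :
    d.rho (S^[m + 1] u) (S^[n + 1] u) ≤
      γ * ((γ / (1 - γ)) ^ m + (γ / (1 - γ)) ^ n) * d.rho u (S u) := by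
  have hm := hS.rho_iterate_succ_le hγ0 hγ u m
  have hn := hS.rho_iterate_succ_le hγ0 hγ u n
  calc d.rho (S^[m + 1] u) (S^[n + 1] u)
      ≤ γ * (d.rho (S^[m] u) (S^[m + 1] u) + d.rho (S^[n] u) (S^[n + 1] u)) := by
        simpa only [Function.iterate_succ_apply'] using hS (S^[m] u) (S^[n] u)
    _ ≤ γ * ((γ / (1 - γ)) ^ m * d.rho u (S u) + (γ / (1 - γ)) ^ n * d.rho u (S u)) := by
        gcongr
    _ = γ * ((γ / (1 - γ)) ^ m + (γ / (1 - γ)) ^ n) * d.rho u (S u) := by ring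

end KannanType

end BvMetric

theorem bv_kannan_picard_cauchy {E : Type*} {v : ℕ} {s : ℝ}
    (d : BvMetric E v s) (S : E → E) (γ : ℝ)
    (hγ0 : 0 ≤ γ) (hγ : γ < 1 / 2) (hS : d.KannanType S γ) (u₀ : E) :
    (∀ n ≥ 1, ∀ p ≥ 1, d.rho (S^[n] u₀) (S^[n + p] u₀) ≤
      γ * ((γ / (1 - γ)) ^ (n - 1) + (γ / (1 - γ)) ^ (n + p - 1)) * d.rho u₀ (S u₀)) ∧
    d.IsCauchy (fun n => S^[n] u₀) := by
  have hγ1 : γ < 1 := by linarith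
  have hbound := hS.rho_iterate_succ_succ_le hγ0 hγ1 u₀
  refine ⟨fun n hn p _ => ?_, d.isCauchy_of_rho_succ_le
    (f := fun k => γ * (γ / (1 - γ)) ^ k * d.rho u₀ (S u₀)) ?_ fun m n => ?_⟩
  · obtain ⟨m, rfl⟩ := Nat.exists_eq_add_of_le' hn
    rw [show m + 1 + p = m + p + 1 by omega, Nat.add_sub_cancel, Nat.add_sub_cancel]
    exact hbound m (m + p)
  · have hr1 : γ / (1 - γ) < 1 := by rw [div_lt_one (by linarith)]; linarith
    simpa using ((tendsto_pow_atTop_nhds_zero_of_lt_one (div_nonneg hγ0 (by linarith)) hr1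
      ).const_mul γ).mul_const (d.rho u₀ (S u₀))
  · exact (hbound m n).trans_eq (by ring)
end

section
/- Let (E, ρ) be a metric space (the case v = s = 1), S : E → E weakly contractive with respect to φ : [0,∞) → [0,∞) nondecreasing, continuous, and φ(t)=0 iff t=0, and let u₀ ∈ E with u_{n+1} = S u_n. Then for any fixed p ≥ 1, the sequence α_n = ρ(u_n, u_{n+p}) is nonincreasing and converges to 0. -/
open Filter Topology

section SuccLeSub

variable {φ : ℝ → ℝ} {α : ℕ → ℝ}

theorem antitone_of_succ_le_sub (hφ : ∀ n, 0 ≤ φ (α n))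
    (hstep : ∀ n, α (n + 1) ≤ α n - φ (α n)) : Antitone α :=
  antitone_nat_of_succ_le fun n => (hstep n).trans (sub_le_self _ (hφ n))

/-- The limit `L` of `α` satisfies `L ≤ L - φ L` by continuity of `φ`, so `φ L = 0`. -/
theorem tendsto_zero_of_succ_le_sub (hα : ∀ n, 0 ≤ α n)
    (hcont : ContinuousOn φ (Set.Ici 0)) (hpos : ∀ t ≥ (0 : ℝ), 0 ≤ φ t)
    (hzero : ∀ t ≥ (0 : ℝ), φ t = 0 → t = 0)
    (hstep : ∀ n, α (n + 1) ≤ α n - φ (α n)) : Tendsto α atTop (𝓝 0) := by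
  have hanti : Antitone α := antitone_of_succ_le_sub (fun n => hpos _ (hα n)) hstep
  have hL : Tendsto α atTop (𝓝 (⨅ n, α n)) := tendsto_atTop_ciInf hanti ⟨0, Set.forall_mem_range.2 hα⟩
  set L := ⨅ n, α n
  have hL0 : 0 ≤ L := le_ciInf hα
  have hφL : Tendsto (fun n => φ (α n)) atTop (𝓝 (φ L)) :=
    (hcont L hL0).tendsto.comp (tendsto_nhdsWithin_iff.mpr ⟨hL, .of_forall hα⟩)
  have hle : L ≤ L - φ L :=
    le_of_tendsto_of_tendsto' (hL.comp (tendsto_add_atTop_nat 1)) (hL.sub hφL) hstep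
  rwa [hzero L hL0 (le_antisymm (by linarith) (hpos L hL0))] at hL

end SuccLeSub

section WeaklyContractive

variable {E : Type*} [MetricSpace E] {S : E → E} {φ : ℝ → ℝ}

theorem dist_iterate_succ_le_sub (hS : ∀ u w : E, dist (S u) (S w) ≤ dist u w - φ (dist u w))
    (u w : E) (n : ℕ) :
    dist (S^[n + 1] u) (S^[n + 1] w) ≤
      dist (S^[n] u) (S^[n] w) - φ (dist (S^[n] u) (S^[n] w)) := by
  simpa only [Function.iterate_succ_apply'] using hS (S^[n] u) (S^[n] w)

theorem antitone_dist_iterate (hpos : ∀ t ≥ (0 : ℝ), 0 ≤ φ t)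
    (hS : ∀ u w : E, dist (S u) (S w) ≤ dist u w - φ (dist u w)) (u w : E) :
    Antitone fun n => dist (S^[n] u) (S^[n] w) :=
  antitone_of_succ_le_sub (fun _ => hpos _ dist_nonneg) (dist_iterate_succ_le_sub hS u w)

theorem tendsto_dist_iterate_zero (hcont : ContinuousOn φ (Set.Ici 0))
    (hpos : ∀ t ≥ (0 : ℝ), 0 ≤ φ t) (hzero : ∀ t ≥ (0 : ℝ), φ t = 0 → t = 0)
    (hS : ∀ u w : E, dist (S u) (S w) ≤ dist u w - φ (dist u w)) (u w : E) :
    Tendsto (fun n => dist (S^[n] u) (S^[n] w)) atTop (𝓝 0) :=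
  tendsto_zero_of_succ_le_sub (fun _ => dist_nonneg) hcont hpos hzero
    (dist_iterate_succ_le_sub hS u w)

end WeaklyContractive

theorem weakly_contractive_gap_antitone_tendsto_zero_general {E : Type*} [MetricSpace E]
    (S : E → E) (φ : ℝ → ℝ)
    (hcont : ContinuousOn φ (Set.Ici 0))
    (hpos : ∀ t ≥ (0 : ℝ), 0 ≤ φ t) (hzero : ∀ t ≥ (0 : ℝ), (φ t = 0 ↔ t = 0))
    (hS : ∀ u w : E, dist (S u) (S w) ≤ dist u w - φ (dist u w))
    (u₀ : E) (p : ℕ) :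
    Antitone (fun n => dist (S^[n] u₀) (S^[n + p] u₀)) ∧
    Tendsto (fun n => dist (S^[n] u₀) (S^[n + p] u₀)) atTop (𝓝 0) := by
  simp only [Function.iterate_add_apply]
  exact ⟨antitone_dist_iterate hpos hS u₀ (S^[p] u₀),
    tendsto_dist_iterate_zero hcont hpos (fun t ht => (hzero t ht).mp) hS u₀ (S^[p] u₀)⟩

theorem weakly_contractive_gap_antitone_tendsto_zero {E : Type*} [MetricSpace E]
    (S : E → E) (φ : ℝ → ℝ)
    (hmono : MonotoneOn φ (Set.Ici 0)) (hcont : ContinuousOn φ (Set.Ici 0))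
    (hpos : ∀ t ≥ (0 : ℝ), 0 ≤ φ t) (hzero : ∀ t ≥ (0 : ℝ), (φ t = 0 ↔ t = 0))
    (hS : ∀ u w : E, dist (S u) (S w) ≤ dist u w - φ (dist u w))
    (u₀ : E) (p : ℕ) (hp : 1 ≤ p) :
    Antitone (fun n => dist (S^[n] u₀) (S^[n + p] u₀)) ∧
    Tendsto (fun n => dist (S^[n] u₀) (S^[n + p] u₀)) atTop (𝓝 0) :=
  weakly_contractive_gap_antitone_tendsto_zero_general S φ hcont hpos hzero hS u₀ p
end
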